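/- Let G be a kernel on R^n_+ having the reflection properties (P1)–(P3) for every λ > 0, let p > 0, and let u : R^n_+ → [0, ∞) be measurable with u(x) = ∫_{R^n_+} G(x, y) u(y)^p dy < ∞ for every x ∈ R^n_+. Fix λ > 0 and set u_λ(x) = u(x^λ), w_λ = u_λ − u. If w_λ(y) ≥ 0 for almost every y ∈ Σ_λ and w_λ > 0 on a subset D ⊆ Σ_λ of positive Lebesgue measure, then w_λ(x) > 0 for every x ∈ Σ_λ. -/

import Mathlib

open MeasureTheory Filter Set Metric
open scoped ENNReal

noncomputable section

variable {n : ℕ}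

/-- Reflection of `x` about the hyperplane `x i = lam`. -/
def reflect (i : Fin n) (lam : ℝ) (x : EuclideanSpace ℝ (Fin n)) :
    EuclideanSpace ℝ (Fin n) :=
  WithLp.toLp 2 (Function.update x i (2 * lam - x i))

/-- The half space `R^n_+ = {x : x i > 0}` (with `i` the last coordinate). -/
def halfSpace (i : Fin n) : Set (EuclideanSpace ℝ (Fin n)) := {x | 0 < x i}

/-- `Σ_λ = {x ∈ R^n_+ : 0 < x i < λ}`. -/
def sigmaSlab (i : Fin n) (lam : ℝ) : Set (EuclideanSpace ℝ (Fin n)) :=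
  {x | 0 < x i ∧ x i < lam}

/-- Property (P1) of a kernel. -/
def PropP1 (i : Fin n) (K : EuclideanSpace ℝ (Fin n) → EuclideanSpace ℝ (Fin n) → ℝ) : Prop :=
  ∀ lam > (0 : ℝ), ∀ x ∈ sigmaSlab i lam, ∀ y ∈ sigmaSlab i lam, x ≠ y →
    max (K (reflect i lam x) y) (K x (reflect i lam y)) <
      K (reflect i lam x) (reflect i lam y)

/-- Property (P2) of a kernel. -/
def PropP2 (i : Fin n) (K : EuclideanSpace ℝ (Fin n) → EuclideanSpace ℝ (Fin n) → ℝ) : Prop :=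
  ∀ lam > (0 : ℝ), ∀ x ∈ sigmaSlab i lam, ∀ y ∈ sigmaSlab i lam, x ≠ y →
    |K (reflect i lam x) y - K x (reflect i lam y)| <
      K (reflect i lam x) (reflect i lam y) - K x y

/-- Property (P3) of a kernel. -/
def PropP3 (i : Fin n) (K : EuclideanSpace ℝ (Fin n) → EuclideanSpace ℝ (Fin n) → ℝ) : Prop :=
  ∀ lam > (0 : ℝ), ∀ x ∈ sigmaSlab i lam, ∀ y : EuclideanSpace ℝ (Fin n),
    0 < y i → lam ≤ y i → y ≠ reflect i lam x →
      K x y < K (reflect i lam x) y ∧ K y x < K y (reflect i lam x)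

/-- A kernel has the reflection properties (P1)-(P3). -/
def HasReflProps (i : Fin n) (K : EuclideanSpace ℝ (Fin n) → EuclideanSpace ℝ (Fin n) → ℝ) :
    Prop :=
  PropP1 i K ∧ PropP2 i K ∧ PropP3 i K

/-!
Writing `f y = (G(x^λ, y) - G(x, y)) u(y)^p`, the integral equation gives `w_λ(x) = ∫ f` over
`R^n_+`. Up to the null hyperplane `y_n = λ`, the half space splits into `Σ_λ`, its mirror image
`λ < y_n < 2λ` and `y_n ≥ 2λ`. On the last piece `f ≥ 0` by (P3). Folding the mirror image onto
`Σ_λ` turns the rest into `∫_{Σ_λ} k₁ u(y)^p + k₂ u(y^λ)^p`, where `k₂ > 0` by (P1) and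
`k₁ + k₂ > 0` by (P2). Since `u(y) ≤ u(y^λ)` a.e. on `Σ_λ` with strict inequality on `D`, this
integrand is nonnegative a.e. and positive on `D` (away from `y = x`), so the integral is positive.
-/

lemma setIntegral_pos_of_nonneg_of_pos_on {α : Type*} [MeasurableSpace α] {μ : Measure α}
    {s D : Set α} {f : α → ℝ} (hf : IntegrableOn f s μ) (hnonneg : 0 ≤ᵐ[μ.restrict s] f)
    (hDs : D ⊆ s) (hD : 0 < μ D) (hpos : ∀ᵐ y ∂μ, y ∈ D → 0 < f y) :
    0 < ∫ y in s, f y ∂μ := by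
  rw [setIntegral_pos_iff_support_of_nonneg_ae hnonneg hf]
  refine hD.trans_le (measure_mono_ae ?_)
  filter_upwards [hpos] with y hy hyD
  exact ⟨(hy hyD).ne', hDs hyD⟩

lemma mul_add_mul_nonneg_of_le {k₁ k₂ a b : ℝ} (hk₂ : 0 ≤ k₂) (hk : 0 ≤ k₁ + k₂) (ha : 0 ≤ a)
    (hab : a ≤ b) : 0 ≤ k₁ * a + k₂ * b := by
  nlinarith [mul_nonneg hk ha, mul_nonneg hk₂ (sub_nonneg.2 hab)]

lemma mul_add_mul_pos_of_lt {k₁ k₂ a b : ℝ} (hk₂ : 0 < k₂) (hk : 0 ≤ k₁ + k₂) (ha : 0 ≤ a)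
    (hab : a < b) : 0 < k₁ * a + k₂ * b := by
  nlinarith [mul_nonneg hk ha, mul_pos hk₂ (sub_pos.2 hab)]

def mirrorSlab (i : Fin n) (lam : ℝ) : Set (EuclideanSpace ℝ (Fin n)) :=
  {y | lam < y i ∧ y i < 2 * lam}

section Reflection

variable (i : Fin n) (lam : ℝ)

@[simp]
lemma reflect_apply_self (x : EuclideanSpace ℝ (Fin n)) : reflect i lam x i = 2 * lam - x i := by
  simp [reflect]

lemma reflect_involutive : Function.Involutive (reflect i lam) := by
  intro x
  ext j
  by_cases h : j = i <;> simp [reflect, h]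

lemma measurePreserving_reflect : MeasurePreserving (reflect i lam) := by
  classical
  have hpi : MeasurePreserving (fun (a : Fin n → ℝ) j =>
      (if j = i then (2 * lam - ·) else id) (a j)) volume volume :=
    volume_preserving_pi fun j => by
      split_ifs
      exacts [Measure.measurePreserving_sub_left _ _, .id _]
  have e := EuclideanSpace.volume_preserving_symm_measurableEquiv_toLp (Fin n)
  convert (e.symm.comp hpi).comp e using 1
  funext x
  ext j
  by_cases h : j = i <;> simp [reflect, h]

lemma measurableEmbedding_reflect : MeasurableEmbedding (reflect i lam) :=
  (MeasurableEquiv.ofInvolutive _ (reflect_involutive i lam)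
    (measurePreserving_reflect i lam).measurable).measurableEmbedding

lemma reflect_mem_halfSpace {x : EuclideanSpace ℝ (Fin n)} (hx : x ∈ sigmaSlab i lam) :
    reflect i lam x ∈ halfSpace i :=
  show 0 < reflect i lam x i by rw [reflect_apply_self]; linarith [hx.1, hx.2]

lemma reflect_preimage_mirrorSlab : reflect i lam ⁻¹' mirrorSlab i lam = sigmaSlab i lam := by
  ext y
  simp only [mem_preimage, mirrorSlab, sigmaSlab, mem_ofPred_eq, reflect_apply_self]
  constructor <;> rintro ⟨h₁, h₂⟩ <;> constructor <;> linarith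

end Reflection

lemma measurable_coord (i : Fin n) : Measurable fun y : EuclideanSpace ℝ (Fin n) => y i := by
  fun_prop

lemma volume_coord_eq (i : Fin n) (c : ℝ) :
    volume {y : EuclideanSpace ℝ (Fin n) | y i = c} = 0 := by
  have e := (EuclideanSpace.volume_preserving_symm_measurableEquiv_toLp (Fin n)).symm
  rw [← e.measure_preimage
    (measurableSet_eq_fun (measurable_coord i) measurable_const).nullMeasurableSet]
  simpa [volume_pi] using Measure.pi_hyperplane (fun _ : Fin n => (volume : Measure ℝ)) i c

lemma volume_singleton_eq_zero (i : Fin n) (z : EuclideanSpace ℝ (Fin n)) :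
    volume ({z} : Set (EuclideanSpace ℝ (Fin n))) = 0 :=
  measure_mono_null (fun y hy => by rw [mem_singleton_iff.1 hy]; rfl) (volume_coord_eq i (z i))

section HalfSpaceIntegral

variable {i : Fin n} {lam : ℝ}

lemma measurableSet_sigmaSlab : MeasurableSet (sigmaSlab i lam) :=
  (measurableSet_lt measurable_const (measurable_coord i)).inter
    (measurableSet_lt (measurable_coord i) measurable_const)

lemma measurableSet_mirrorSlab : MeasurableSet (mirrorSlab i lam) :=
  (measurableSet_lt measurable_const (measurable_coord i)).inter
    (measurableSet_lt (measurable_coord i) measurable_const)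

lemma sigmaSlab_subset_halfSpace : sigmaSlab i lam ⊆ halfSpace i := fun _ hy => hy.1

lemma mirrorSlab_subset_halfSpace : mirrorSlab i lam ⊆ halfSpace i :=
  fun y (hy : _ ∧ _) => show 0 < y i by linarith [hy.1, hy.2]

lemma halfSpace_ae_eq_union (hlam : 0 < lam) :
    halfSpace i =ᵐ[volume] (sigmaSlab i lam ∪ mirrorSlab i lam ∪ {y | 2 * lam ≤ y i} : Set _) := by
  have hsub : sigmaSlab i lam ∪ mirrorSlab i lam ∪ {y | 2 * lam ≤ y i} ⊆ halfSpace i :=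
    union_subset (union_subset sigmaSlab_subset_halfSpace mirrorSlab_subset_halfSpace)
      fun y (hy : 2 * lam ≤ y i) => show 0 < y i by linarith
  refine ae_eq_set.2 ⟨measure_mono_null (fun y ⟨(hy : 0 < y i), hy'⟩ => ?_)
    (volume_coord_eq i lam), by simp [sdiff_eq_empty.2 hsub]⟩
  simp only [mem_union, not_or, sigmaSlab, mirrorSlab, mem_ofPred_eq, not_and, not_le] at hy'
  obtain ⟨⟨hslab, hmirror⟩, hfar⟩ := hy'
  rcases lt_trichotomy (y i) lam with h | h | h
  · exact absurd h (hslab hy)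
  · exact h
  · linarith [hmirror h, hfar]

lemma integrableOn_sigmaSlab_comp_reflect {f : EuclideanSpace ℝ (Fin n) → ℝ}
    (hf : IntegrableOn f (halfSpace i)) :
    IntegrableOn (fun y => f (reflect i lam y)) (sigmaSlab i lam) := by
  rw [← reflect_preimage_mirrorSlab]
  exact ((measurePreserving_reflect i lam).integrableOn_comp_preimage
    (measurableEmbedding_reflect i lam)).2 (hf.mono_set mirrorSlab_subset_halfSpace)

lemma integral_halfSpace_eq_sigmaSlab_add (hlam : 0 < lam) {f : EuclideanSpace ℝ (Fin n) → ℝ}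
    (hf : IntegrableOn f (halfSpace i)) :
    ∫ y in halfSpace i, f y =
      (∫ y in sigmaSlab i lam, (f y + f (reflect i lam y))) + ∫ y in {y | 2 * lam ≤ y i}, f y := by
  have hslab : IntegrableOn f (sigmaSlab i lam) := hf.mono_set sigmaSlab_subset_halfSpace
  have hmirror : IntegrableOn f (mirrorSlab i lam) := hf.mono_set mirrorSlab_subset_halfSpace
  have hfar : IntegrableOn f {y | 2 * lam ≤ y i} :=
    hf.mono_set fun y (hy : 2 * lam ≤ y i) => show 0 < y i by linarith
  have hdisj₁ : Disjoint (sigmaSlab i lam) (mirrorSlab i lam) :=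
    disjoint_left.2 fun y (hslab : _ ∧ _) (hmirror : _ ∧ _) => by linarith [hslab.2, hmirror.1]
  have hdisj₂ : Disjoint (sigmaSlab i lam ∪ mirrorSlab i lam) {y | 2 * lam ≤ y i} :=
    disjoint_left.2 fun y hy (hfar : 2 * lam ≤ y i) => by
      rcases hy with (hy : _ ∧ _) | (hy : _ ∧ _) <;> linarith [hy.2]
  have hfold : ∫ y in mirrorSlab i lam, f y = ∫ y in sigmaSlab i lam, f (reflect i lam y) := by
    rw [← (measurePreserving_reflect i lam).setIntegral_preimage_emb
      (measurableEmbedding_reflect i lam) f _, reflect_preimage_mirrorSlab]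
  rw [setIntegral_congr_set (halfSpace_ae_eq_union hlam),
    setIntegral_union hdisj₂ (measurableSet_le measurable_const (measurable_coord i))
      (hslab.union hmirror) hfar,
    setIntegral_union hdisj₁ measurableSet_mirrorSlab hslab hmirror, hfold,
    integral_add hslab (integrableOn_sigmaSlab_comp_reflect hf)]

end HalfSpaceIntegral

section Kernel

variable {i : Fin n} {G : EuclideanSpace ℝ (Fin n) → EuclideanSpace ℝ (Fin n) → ℝ} {lam : ℝ}
  {x y : EuclideanSpace ℝ (Fin n)}

lemma PropP1.lt_reflect (h : PropP1 i G) (hlam : 0 < lam) (hx : x ∈ sigmaSlab i lam)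
    (hy : y ∈ sigmaSlab i lam) (hxy : x ≠ y) :
    G x (reflect i lam y) < G (reflect i lam x) (reflect i lam y) :=
  (le_max_right _ _).trans_lt (h lam hlam x hx y hy hxy)

lemma PropP2.sub_add_sub_pos (h : PropP2 i G) (hlam : 0 < lam) (hx : x ∈ sigmaSlab i lam)
    (hy : y ∈ sigmaSlab i lam) (hxy : x ≠ y) :
    0 < (G (reflect i lam x) y - G x y) +
      (G (reflect i lam x) (reflect i lam y) - G x (reflect i lam y)) := by
  linarith [(abs_lt.1 (h lam hlam x hx y hy hxy)).1]

lemma PropP3.le_reflect (h : PropP3 i G) (hlam : 0 < lam) (hx : x ∈ sigmaSlab i lam)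
    (hy : 2 * lam ≤ y i) : G x y ≤ G (reflect i lam x) y := by
  have hne : y ≠ reflect i lam x := fun hyx => by
    have := congrArg (· i) hyx
    simp only [reflect_apply_self] at this
    linarith [hx.1]
  exact (h lam hlam x hx y (by linarith) (by linarith) hne).1.le

variable {p a b : ℝ}

/-- For `a = u y`, `b = u (y^λ)`: the integrand of `w_λ(x)` over `Σ_λ` after folding. -/
lemma folded_integrand_nonneg (h₁ : PropP1 i G) (h₂ : PropP2 i G) (hlam : 0 < lam)
    (hx : x ∈ sigmaSlab i lam) (hy : y ∈ sigmaSlab i lam) (hxy : x ≠ y) (hp : 0 ≤ p)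
    (ha : 0 ≤ a) (hab : a ≤ b) :
    0 ≤ (G (reflect i lam x) y - G x y) * a ^ p +
      (G (reflect i lam x) (reflect i lam y) - G x (reflect i lam y)) * b ^ p :=
  mul_add_mul_nonneg_of_le (sub_nonneg.2 (h₁.lt_reflect hlam hx hy hxy).le)
    (h₂.sub_add_sub_pos hlam hx hy hxy).le
    (Real.rpow_nonneg ha p) (Real.rpow_le_rpow ha hab hp)

lemma folded_integrand_pos (h₁ : PropP1 i G) (h₂ : PropP2 i G) (hlam : 0 < lam)
    (hx : x ∈ sigmaSlab i lam) (hy : y ∈ sigmaSlab i lam) (hxy : x ≠ y) (hp : 0 < p)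
    (ha : 0 ≤ a) (hab : a < b) :
    0 < (G (reflect i lam x) y - G x y) * a ^ p +
      (G (reflect i lam x) (reflect i lam y) - G x (reflect i lam y)) * b ^ p :=
  mul_add_mul_pos_of_lt (sub_pos.2 (h₁.lt_reflect hlam hx hy hxy))
    (h₂.sub_add_sub_pos hlam hx hy hxy).le
    (Real.rpow_nonneg ha p) (Real.rpow_lt_rpow ha hab hp)

end Kernel

section IntegralEquation

variable {i : Fin n} {G : EuclideanSpace ℝ (Fin n) → EuclideanSpace ℝ (Fin n) → ℝ} {p : ℝ}
  {u : EuclideanSpace ℝ (Fin n) → ℝ} {x x' : EuclideanSpace ℝ (Fin n)}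

lemma integrableOn_kernel_sub_mul
    (hu_int : ∀ x ∈ halfSpace i, IntegrableOn (fun y => G x y * u y ^ p) (halfSpace i))
    (hx : x ∈ halfSpace i) (hx' : x' ∈ halfSpace i) :
    IntegrableOn (fun y => (G x' y - G x y) * u y ^ p) (halfSpace i) :=
  ((hu_int x' hx').sub (hu_int x hx)).congr_fun (fun _ _ => (sub_mul _ _ _).symm)
    (measurableSet_lt measurable_const (measurable_coord i))

lemma sub_eq_integral_kernel_sub_mul
    (hu_int : ∀ x ∈ halfSpace i, IntegrableOn (fun y => G x y * u y ^ p) (halfSpace i))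
    (hu_eq : ∀ x ∈ halfSpace i, u x = ∫ y in halfSpace i, G x y * u y ^ p)
    (hx : x ∈ halfSpace i) (hx' : x' ∈ halfSpace i) :
    u x' - u x = ∫ y in halfSpace i, (G x' y - G x y) * u y ^ p := by
  simp only [sub_mul]
  rw [hu_eq x' hx', hu_eq x hx, integral_sub (hu_int x' hx') (hu_int x hx)]

end IntegralEquation

theorem w_lambda_strictly_positive_general
    (n : ℕ) (i : Fin n)
    (G : EuclideanSpace ℝ (Fin n) → EuclideanSpace ℝ (Fin n) → ℝ)
    (hGrefl : HasReflProps i G)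
    (p : ℝ) (hp : 0 < p)
    (u : EuclideanSpace ℝ (Fin n) → ℝ)
    (hu_nonneg : ∀ x ∈ halfSpace i, 0 ≤ u x)
    (hu_int : ∀ x ∈ halfSpace i, IntegrableOn (fun y => G x y * u y ^ p) (halfSpace i))
    (hu_eq : ∀ x ∈ halfSpace i, u x = ∫ y in halfSpace i, G x y * u y ^ p)
    (lam : ℝ) (hlam : 0 < lam)
    (hae : ∀ᵐ y ∂(volume.restrict (sigmaSlab i lam)),
      0 ≤ u (reflect i lam y) - u y)
    (hD : ∃ D ⊆ sigmaSlab i lam, 0 < volume D ∧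
      ∀ y ∈ D, 0 < u (reflect i lam y) - u y) :
    ∀ x ∈ sigmaSlab i lam, 0 < u (reflect i lam x) - u x := by
  obtain ⟨hP1, hP2, hP3⟩ := hGrefl
  obtain ⟨D, hDsub, hDpos, hDw⟩ := hD
  intro x hx
  have hRx := reflect_mem_halfSpace i lam hx
  have hf := integrableOn_kernel_sub_mul hu_int hx.1 hRx
  have hne : ∀ᵐ y ∂volume, y ≠ x := compl_mem_ae_iff.2 (volume_singleton_eq_zero i x)
  have hmono : ∀ᵐ y ∂volume, y ∈ sigmaSlab i lam → u y ≤ u (reflect i lam y) :=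
    ((ae_restrict_iff' measurableSet_sigmaSlab).1 hae).mono fun y h hy => sub_nonneg.1 (h hy)
  rw [sub_eq_integral_kernel_sub_mul hu_int hu_eq hx.1 hRx,
    integral_halfSpace_eq_sigmaSlab_add hlam hf]
  refine add_pos_of_pos_of_nonneg (setIntegral_pos_of_nonneg_of_pos_on
    ((hf.mono_set sigmaSlab_subset_halfSpace).add (integrableOn_sigmaSlab_comp_reflect hf))
    ?_ hDsub hDpos ?_) ?_
  · filter_upwards [ae_restrict_mem measurableSet_sigmaSlab, ae_restrict_of_ae hne,
      ae_restrict_of_ae hmono] with y hy hyx hyu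
    exact folded_integrand_nonneg hP1 hP2 hlam hx hy (Ne.symm hyx) hp.le (hu_nonneg y hy.1) (hyu hy)
  · filter_upwards [hne] with y hyx hyD
    exact folded_integrand_pos hP1 hP2 hlam hx (hDsub hyD) (Ne.symm hyx) hp
      (hu_nonneg y (hDsub hyD).1) (sub_pos.1 (hDw y hyD))
  · refine setIntegral_nonneg (measurableSet_le measurable_const (measurable_coord i))
      fun y (hy : 2 * lam ≤ y i) => mul_nonneg (sub_nonneg.2 (hP3.le_reflect hlam hx hy))
        (Real.rpow_nonneg (hu_nonneg y (show 0 < y i by linarith)) p)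

/-- if `w_λ ≥ 0` a.e. on `Σ_λ` and `w_λ > 0` on a set of positive
measure, then `w_λ > 0` everywhere on `Σ_λ`. -/
theorem w_lambda_strictly_positive
    (n : ℕ) (i : Fin n) (hi : (i : ℕ) = n - 1) (hn : 2 ≤ n)
    (G : EuclideanSpace ℝ (Fin n) → EuclideanSpace ℝ (Fin n) → ℝ)
    (hGpos : ∀ x ∈ halfSpace i, ∀ y ∈ halfSpace i, 0 < G x y)
    (hGrefl : HasReflProps i G)
    (p : ℝ) (hp : 0 < p)
    (u : EuclideanSpace ℝ (Fin n) → ℝ) (hu_meas : Measurable u)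
    (hu_nonneg : ∀ x ∈ halfSpace i, 0 ≤ u x)
    (hu_int : ∀ x ∈ halfSpace i, IntegrableOn (fun y => G x y * u y ^ p) (halfSpace i))
    (hu_eq : ∀ x ∈ halfSpace i, u x = ∫ y in halfSpace i, G x y * u y ^ p)
    (lam : ℝ) (hlam : 0 < lam)
    (hae : ∀ᵐ y ∂(volume.restrict (sigmaSlab i lam)),
      0 ≤ u (reflect i lam y) - u y)
    (hD : ∃ D ⊆ sigmaSlab i lam, 0 < volume D ∧
      ∀ y ∈ D, 0 < u (reflect i lam y) - u y) :
    ∀ x ∈ sigmaSlab i lam, 0 < u (reflect i lam x) - u x :=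
  w_lambda_strictly_positive_general n i G hGrefl p hp u hu_nonneg hu_int hu_eq lam hlam hae hD
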